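/- For a row contraction T, if the n-th and (n+1)-th defect dimensions coincide and are finite (equivalently D_n = D_{n+1}), then D_n = D_m for all m > n. -/

import Mathlib

open ContinuousLinearMap

/-- The completely positive map `Ψ_T(X) = ∑ i, T i X (T i)*` associated to a `d`-tuple. -/
noncomputable def psiMap {H : Type*} [NormedAddCommGroup H] [InnerProductSpace ℂ H]
    [CompleteSpace H] {d : ℕ} (T : Fin d → H →L[ℂ] H) (X : H →L[ℂ] H) : H →L[ℂ] H :=
  ∑ i, T i ∘L X ∘L adjoint (T i)

/-- The `n`-th defect space: the closure of the range of `I - Ψ_T^n(I)`. -/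
noncomputable def defectSpace {H : Type*} [NormedAddCommGroup H] [InnerProductSpace ℂ H]
    [CompleteSpace H] {d : ℕ} (T : Fin d → H →L[ℂ] H) (n : ℕ) : Submodule ℂ H :=
  (LinearMap.range ((1 - (psiMap T)^[n] 1 : H →L[ℂ] H) : H →ₗ[ℂ] H)).topologicalClosure

/-! Write `A_m = 1 - Ψ^m(1)`. By induction `A_m ≥ 0`, so `D_m = (ker A_m)ᗮ`. A positive
operator `P` kills `x` iff `⟪P x, x⟫ = 0`; since `A_{m+1} = A_1 + Ψ(A_m)` is a sum of positive
operators this gives `ker A_{m+1} = ker A_1 ∩ ⋂ i, (T i)*⁻¹ (ker A_m)`, which depends only on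
`ker A_m`. Hence once two consecutive kernels agree, all later ones do. -/

open scoped InnerProductSpace InnerProduct ComplexOrder

section PositiveKernel

variable {E F : Type*} [NormedAddCommGroup E] [InnerProductSpace ℂ E] [CompleteSpace E]
  [NormedAddCommGroup F] [InnerProductSpace ℂ F] [CompleteSpace F]

namespace ContinuousLinearMap

theorem IsPositive.apply_eq_zero_iff_inner_eq_zero {P : E →L[ℂ] E} (hP : P.IsPositive) (x : E) :
    P x = 0 ↔ ⟪P x, x⟫_ℂ = 0 := by
  obtain ⟨S, rfl⟩ :=
    CStarAlgebra.nonneg_iff_eq_star_mul_self.mp ((nonneg_iff_isPositive P).mpr hP)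
  rw [star_eq_adjoint, mul_def, comp_apply, adjoint_inner_left, inner_self_eq_zero]
  refine ⟨fun h => ?_, fun h => by rw [h, map_zero]⟩
  rw [← inner_self_eq_zero (𝕜 := ℂ), ← adjoint_inner_left, h, inner_zero_left]

theorem ker_sum_of_isPositive {ι : Type*} (s : Finset ι) {P : ι → E →L[ℂ] E}
    (hP : ∀ i ∈ s, (P i).IsPositive) :
    LinearMap.ker ((∑ i ∈ s, P i : E →L[ℂ] E) : E →ₗ[ℂ] E)
      = ⨅ i ∈ s, LinearMap.ker (P i : E →ₗ[ℂ] E) := by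
  ext x
  simp only [LinearMap.mem_ker, coe_coe, Submodule.mem_iInf]
  rw [IsPositive.apply_eq_zero_iff_inner_eq_zero (isPositive_sum s hP), sum_apply, sum_inner,
    Finset.sum_eq_zero_iff_of_nonneg fun i hi => (hP i hi).inner_nonneg_left x]
  exact forall₂_congr fun i hi => ((hP i hi).apply_eq_zero_iff_inner_eq_zero x).symm

theorem IsPositive.ker_add {P Q : E →L[ℂ] E} (hP : P.IsPositive) (hQ : Q.IsPositive) :
    LinearMap.ker ((P + Q : E →L[ℂ] E) : E →ₗ[ℂ] E)
      = LinearMap.ker (P : E →ₗ[ℂ] E) ⊓ LinearMap.ker (Q : E →ₗ[ℂ] E) := by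
  ext x
  simp only [Submodule.mem_inf, LinearMap.mem_ker, coe_coe]
  rw [(hP.add hQ).apply_eq_zero_iff_inner_eq_zero, hP.apply_eq_zero_iff_inner_eq_zero,
    hQ.apply_eq_zero_iff_inner_eq_zero, add_apply, inner_add_left]
  exact add_eq_zero_iff_of_nonneg (hP.inner_nonneg_left x) (hQ.inner_nonneg_left x)

theorem IsPositive.ker_conj_adjoint {X : E →L[ℂ] E} (hX : X.IsPositive) (S : E →L[ℂ] F) :
    LinearMap.ker ((S ∘L X ∘L S† : F →L[ℂ] F) : F →ₗ[ℂ] F)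
      = (LinearMap.ker (X : E →ₗ[ℂ] E)).comap (S† : F →ₗ[ℂ] E) := by
  ext x
  simp only [LinearMap.mem_ker, Submodule.mem_comap, coe_coe]
  rw [(hX.conj_adjoint S).apply_eq_zero_iff_inner_eq_zero, hX.apply_eq_zero_iff_inner_eq_zero,
    comp_apply, comp_apply, ← adjoint_inner_right]

end ContinuousLinearMap

end PositiveKernel

theorem Nat.eq_of_le_of_eq_succ {α : Type*} (K : ℕ → α)
    (hK : ∀ a b, K a = K b → K (a + 1) = K (b + 1)) {n : ℕ} (hn : K n = K (n + 1)) :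
    ∀ m, n ≤ m → K m = K n := by
  intro m hm
  induction m, hm using Nat.le_induction with
  | base => rfl
  | succ m _ ih => rw [hK m n ih, ← hn]

section Defect

variable {H : Type*} [NormedAddCommGroup H] [InnerProductSpace ℂ H] [CompleteSpace H]
  {d : ℕ} {T : Fin d → H →L[ℂ] H}

variable (T) in
noncomputable def defectOp (m : ℕ) : H →L[ℂ] H := 1 - (psiMap T)^[m] 1

theorem psiMap_sub (X Y : H →L[ℂ] H) : psiMap T (X - Y) = psiMap T X - psiMap T Y := by
  simp only [psiMap, comp_sub, sub_comp, Finset.sum_sub_distrib]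

theorem ContinuousLinearMap.IsPositive.psiMap {X : H →L[ℂ] H} (hX : X.IsPositive) :
    (_root_.psiMap T X).IsPositive :=
  isPositive_sum _ fun i _ => hX.conj_adjoint (T i)

theorem ContinuousLinearMap.IsPositive.ker_psiMap {X : H →L[ℂ] H} (hX : X.IsPositive) :
    LinearMap.ker ((_root_.psiMap T X : H →L[ℂ] H) : H →ₗ[ℂ] H)
      = ⨅ i, (LinearMap.ker (X : H →ₗ[ℂ] H)).comap (T i† : H →ₗ[ℂ] H) := by
  rw [_root_.psiMap, ker_sum_of_isPositive _ fun i _ => hX.conj_adjoint (T i)]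
  simp only [Finset.mem_univ, iInf_pos, hX.ker_conj_adjoint]

theorem defectOp_succ (m : ℕ) :
    defectOp T (m + 1) = (1 - psiMap T 1) + psiMap T (defectOp T m) := by
  rw [defectOp, defectOp, psiMap_sub, Function.iterate_succ_apply']
  abel

theorem isPositive_defectOp (hT : (1 - psiMap T 1).IsPositive) (m : ℕ) :
    (defectOp T m).IsPositive := by
  induction m with
  | zero => simp [defectOp, isPositive_zero]
  | succ m ih => rw [defectOp_succ]; exact hT.add ih.psiMap

theorem ker_defectOp_succ (hT : (1 - psiMap T 1).IsPositive) (m : ℕ) :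
    LinearMap.ker (defectOp T (m + 1) : H →ₗ[ℂ] H)
      = LinearMap.ker ((1 - psiMap T 1 : H →L[ℂ] H) : H →ₗ[ℂ] H)
        ⊓ ⨅ i, (LinearMap.ker (defectOp T m : H →ₗ[ℂ] H)).comap (T i† : H →ₗ[ℂ] H) := by
  have hm := isPositive_defectOp hT m
  rw [defectOp_succ, hT.ker_add hm.psiMap, hm.ker_psiMap]

theorem orthogonal_defectSpace (hT : (1 - psiMap T 1).IsPositive) (m : ℕ) :
    (defectSpace T m)ᗮ = LinearMap.ker (defectOp T m : H →ₗ[ℂ] H) := by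
  rw [defectSpace, Submodule.orthogonal_closure]
  exact (isPositive_defectOp hT m).isSymmetric.orthogonal_range

theorem defectSpace_eq_orthogonal_ker (hT : (1 - psiMap T 1).IsPositive) (m : ℕ) :
    defectSpace T m = (LinearMap.ker (defectOp T m : H →ₗ[ℂ] H))ᗮ := by
  rw [defectSpace, ← Submodule.orthogonal_orthogonal_eq_closure]
  exact congrArg _ (isPositive_defectOp hT m).isSymmetric.orthogonal_range

end Defect

/-- If the `n`-th and `(n+1)`-th defect spaces coincide, then `D_n = D_m` for all `m > n`
(so the defect sequence stabilizes). -/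
theorem stmt9 {H : Type*} [NormedAddCommGroup H] [InnerProductSpace ℂ H] [CompleteSpace H]
    {d : ℕ} (T : Fin d → H →L[ℂ] H)
    (hT : (1 - psiMap T 1).IsPositive)
    (n : ℕ) (hstab : defectSpace T n = defectSpace T (n + 1)) :
    ∀ m : ℕ, n < m → defectSpace T n = defectSpace T m := by
  have hker : LinearMap.ker (defectOp T n : H →ₗ[ℂ] H)
      = LinearMap.ker (defectOp T (n + 1) : H →ₗ[ℂ] H) := by
    rw [← orthogonal_defectSpace hT, ← orthogonal_defectSpace hT, hstab]
  intro m hm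
  rw [defectSpace_eq_orthogonal_ker hT, defectSpace_eq_orthogonal_ker hT,
    Nat.eq_of_le_of_eq_succ (fun m => LinearMap.ker (defectOp T m : H →ₗ[ℂ] H))
      (fun a b h => by simp only [ker_defectOp_succ hT, h]) hker m hm.le]
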